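/- arXiv:2312.10396 — 3 statements merged into one kernel-verified Lean document; each statement's English description precedes it below -/
import Mathlib

section
/- Under the Blum–Stangl bias model (positive examples in group 0 survive with probability β_p > 0, negative examples with probability β_n > 0, surviving positives flip label with probability ν, label flips independent of the classifier and features given (Y,A), and flipped points receiving Ỹ=1 never arise from Y=0), for any classifier h: P(h=1 | Ỹ=1, A=0) = P(h=1 | Y=1, A=0). Consequently, a classifier satisfies equal opportunity (equal group-wise TPRs) with respect to the biased distribution if and only if it does so with respect to the original distribution. -/
open MeasureTheory

/-- Under the Blum–Stangl bias model (label flips independent of the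
classifier given `(Y, A)`, and no point with `Yt = 1` arises from `Y = 0` in
group `0`; group `1` is unaffected), the biased TPR on group `0` equals the
clean TPR, and hence equal opportunity holds on the biased distribution iff
it holds on the original one. -/
theorem blum_stangl_tpr_preserved {Ω : Type*} [MeasurableSpace Ω]
    (μ : Measure Ω) [IsProbabilityMeasure μ]
    (Y Yt H A : Ω → Bool)
    (hY : Measurable Y) (hYt : Measurable Yt) (hH : Measurable H)
    (hA : Measurable A)
    -- no flipped point with Yt = 1 comes from Y = 0 in group 0
    (hflip : μ ({ω | Yt ω = true} ∩ {ω | Y ω = false} ∩ {ω | A ω = false}) = 0)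
    -- conditional independence of Yt and H given (Y = 1, A = 0)
    (hindep :
      (μ ({ω | H ω = true} ∩ {ω | Yt ω = true} ∩ {ω | Y ω = true} ∩ {ω | A ω = false})).toReal *
        (μ ({ω | Y ω = true} ∩ {ω | A ω = false})).toReal =
      (μ ({ω | H ω = true} ∩ {ω | Y ω = true} ∩ {ω | A ω = false})).toReal *
        (μ ({ω | Yt ω = true} ∩ {ω | Y ω = true} ∩ {ω | A ω = false})).toReal)
    (hposYt0 : 0 < (μ ({ω | Yt ω = true} ∩ {ω | A ω = false})).toReal)
    (hposY0 : 0 < (μ ({ω | Y ω = true} ∩ {ω | A ω = false})).toReal)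
    -- group 1 is unaffected by the bias
    (hgroup1 :
      (μ ({ω | H ω = true} ∩ {ω | Yt ω = true} ∩ {ω | A ω = true})).toReal /
        (μ ({ω | Yt ω = true} ∩ {ω | A ω = true})).toReal =
      (μ ({ω | H ω = true} ∩ {ω | Y ω = true} ∩ {ω | A ω = true})).toReal /
        (μ ({ω | Y ω = true} ∩ {ω | A ω = true})).toReal) :
    (μ ({ω | H ω = true} ∩ {ω | Yt ω = true} ∩ {ω | A ω = false})).toReal /
        (μ ({ω | Yt ω = true} ∩ {ω | A ω = false})).toReal =
      (μ ({ω | H ω = true} ∩ {ω | Y ω = true} ∩ {ω | A ω = false})).toReal /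
        (μ ({ω | Y ω = true} ∩ {ω | A ω = false})).toReal ∧
    ((μ ({ω | H ω = true} ∩ {ω | Yt ω = true} ∩ {ω | A ω = false})).toReal /
        (μ ({ω | Yt ω = true} ∩ {ω | A ω = false})).toReal =
      (μ ({ω | H ω = true} ∩ {ω | Yt ω = true} ∩ {ω | A ω = true})).toReal /
        (μ ({ω | Yt ω = true} ∩ {ω | A ω = true})).toReal ↔
      (μ ({ω | H ω = true} ∩ {ω | Y ω = true} ∩ {ω | A ω = false})).toReal /
        (μ ({ω | Y ω = true} ∩ {ω | A ω = false})).toReal =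
      (μ ({ω | H ω = true} ∩ {ω | Y ω = true} ∩ {ω | A ω = true})).toReal /
        (μ ({ω | Y ω = true} ∩ {ω | A ω = true})).toReal) := by
  -- Up to a null set, {Yt=1, A=0} coincides with {Yt=1, Y=1, A=0}.
  have hnull : ∀ s : Set Ω,
      s ∩ ({ω | Yt ω = true} ∩ {ω | Y ω = false} ∩ {ω | A ω = false}) = s →
      μ s = 0 := by
    intro s hs
    have : μ s ≤ μ ({ω | Yt ω = true} ∩ {ω | Y ω = false} ∩ {ω | A ω = false}) := by
      apply measure_mono
      intro x hx
      rw [← hs] at hx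
      exact hx.2
    simpa [hflip] using this
  have hb : μ ({ω | Yt ω = true} ∩ {ω | A ω = false}) =
      μ ({ω | Yt ω = true} ∩ {ω | Y ω = true} ∩ {ω | A ω = false}) := by
    have h0 : μ ({ω | Yt ω = true} ∩ {ω | A ω = false} ∩ {ω | Y ω = false}) = 0 := by
      apply hnull
      ext ω; simp [Set.mem_inter_iff]; tauto
    have := measure_inter_add_diff (μ := μ) ({ω | Yt ω = true} ∩ {ω | A ω = false})
      (hY (MeasurableSet.singleton true))
    have hdiff : ({ω | Yt ω = true} ∩ {ω | A ω = false}) \ (Y ⁻¹' {true}) =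
        {ω | Yt ω = true} ∩ {ω | A ω = false} ∩ {ω | Y ω = false} := by
      ext ω; simp [Set.mem_inter_iff, Set.mem_diff]
    have hint : ({ω | Yt ω = true} ∩ {ω | A ω = false}) ∩ (Y ⁻¹' {true}) =
        {ω | Yt ω = true} ∩ {ω | Y ω = true} ∩ {ω | A ω = false} := by
      ext ω; simp [Set.mem_inter_iff]; tauto
    rw [hdiff, hint, h0, add_zero] at this
    exact this.symm
  have ha : μ ({ω | H ω = true} ∩ {ω | Yt ω = true} ∩ {ω | A ω = false}) =
      μ ({ω | H ω = true} ∩ {ω | Yt ω = true} ∩ {ω | Y ω = true} ∩ {ω | A ω = false}) := by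
    have h0 : μ ({ω | H ω = true} ∩ {ω | Yt ω = true} ∩ {ω | A ω = false} ∩ {ω | Y ω = false}) = 0 := by
      apply hnull
      ext ω; simp [Set.mem_inter_iff]; tauto
    have := measure_inter_add_diff (μ := μ) ({ω | H ω = true} ∩ {ω | Yt ω = true} ∩ {ω | A ω = false})
      (hY (MeasurableSet.singleton true))
    have hdiff : ({ω | H ω = true} ∩ {ω | Yt ω = true} ∩ {ω | A ω = false}) \ (Y ⁻¹' {true}) =
        {ω | H ω = true} ∩ {ω | Yt ω = true} ∩ {ω | A ω = false} ∩ {ω | Y ω = false} := by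
      ext ω; simp [Set.mem_inter_iff, Set.mem_diff]
    have hint : ({ω | H ω = true} ∩ {ω | Yt ω = true} ∩ {ω | A ω = false}) ∩ (Y ⁻¹' {true}) =
        {ω | H ω = true} ∩ {ω | Yt ω = true} ∩ {ω | Y ω = true} ∩ {ω | A ω = false} := by
      ext ω; simp [Set.mem_inter_iff]; tauto
    rw [hdiff, hint, h0, add_zero] at this
    exact this.symm
  have key :
      (μ ({ω | H ω = true} ∩ {ω | Yt ω = true} ∩ {ω | A ω = false})).toReal /
        (μ ({ω | Yt ω = true} ∩ {ω | A ω = false})).toReal =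
      (μ ({ω | H ω = true} ∩ {ω | Y ω = true} ∩ {ω | A ω = false})).toReal /
        (μ ({ω | Y ω = true} ∩ {ω | A ω = false})).toReal := by
    rw [ha, hb]
    rw [hb] at hposYt0
    rw [div_eq_div_iff hposYt0.ne' hposY0.ne']
    linarith [hindep]
  exact ⟨key, by rw [key, hgroup1]⟩
end

section
/- Let r, δ, ν, β_p, β_n be reals with 0 < r < 1, 0 ≤ δ < 1/2, 0 < ν < 1, 0 < β_p, β_n ≤ 1, and c = β_n/β_p. There exists λ ∈ ℝ satisfying simultaneously (2δ−1)(1−r) < λ < (1−2δ)(1−r) and r·(1 − 2(1−δ)(1−ν)/(c + (1−c)(1−δ))) < λ < r·(1 − 2δ(1−ν)/(δ(1−c) + c)) if and only if β_p(1−δ)(1 − 2δ − 2r(ν − δ)) + δβ_n(1 − 2δ − 2r(1−δ)) > 0 and β_p·δ·(1 − 2r(1−ν) − 2δ(1−r)) + (1−δ)β_n(1 − 2δ(1−r)) > 0. -/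
/-- Interval-intersection characterization of the demographic parity recovery
conditions: a Lagrange multiplier `λ` placing both group thresholds in
`(δ, 1-δ)` exists iff the two stated polynomial inequalities in the bias
parameters hold. -/
theorem dp_recovery_interval (r δ ν βp βn c : ℝ)
    (hr : 0 < r) (hr1 : r < 1)
    (hδ0 : 0 ≤ δ) (hδ : δ < 1/2)
    (hν0 : 0 < ν) (hν1 : ν < 1)
    (hβp0 : 0 < βp) (hβp1 : βp ≤ 1)
    (hβn0 : 0 < βn) (hβn1 : βn ≤ 1)
    (hc : c = βn / βp)
    (hden1 : 0 < c + (1 - c) * (1 - δ))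
    (hden2 : 0 < δ * (1 - c) + c) :
    (∃ lam : ℝ,
      ((2*δ - 1) * (1 - r) < lam ∧ lam < (1 - 2*δ) * (1 - r)) ∧
      (r * (1 - 2 * (1 - δ) * (1 - ν) / (c + (1 - c) * (1 - δ))) < lam ∧
        lam < r * (1 - 2 * δ * (1 - ν) / (δ * (1 - c) + c)))) ↔
    (βp * (1 - δ) * (1 - 2*δ - 2*r*(ν - δ)) + δ * βn * (1 - 2*δ - 2*r*(1 - δ)) > 0 ∧
     βp * δ * (1 - 2*r*(1 - ν) - 2*δ*(1 - r)) + (1 - δ) * βn * (1 - 2*δ*(1 - r)) > 0) := by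
  have hβp : βp ≠ 0 := hβp0.ne'
  set d1 : ℝ := δ * βn + (1 - δ) * βp with hd1def
  set d2 : ℝ := δ * βp + (1 - δ) * βn with hd2def
  have hd1 : 0 < d1 := by
    have h1 : 0 ≤ δ * βn := by positivity
    nlinarith
  have hd2 : 0 < d2 := by
    have h1 : 0 ≤ δ * βp := by positivity
    nlinarith
  have hrw1 : c + (1 - c) * (1 - δ) = d1 / βp := by
    rw [hc, hd1def]; field_simp; ring
  have hrw2 : δ * (1 - c) + c = d2 / βp := by
    rw [hc, hd2def]; field_simp; ring
  rw [hrw1, hrw2]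
  set a1 := (2*δ - 1) * (1 - r) with ha1
  set b1 := (1 - 2*δ) * (1 - r) with hb1
  set a2 := r * (1 - 2 * (1 - δ) * (1 - ν) / (d1 / βp)) with ha2
  set b2 := r * (1 - 2 * δ * (1 - ν) / (d2 / βp)) with hb2
  set P1 := βp * (1 - δ) * (1 - 2*δ - 2*r*(ν - δ)) + δ * βn * (1 - 2*δ - 2*r*(1 - δ)) with hP1
  set P2 := βp * δ * (1 - 2*r*(1 - ν) - 2*δ*(1 - r)) + (1 - δ) * βn * (1 - 2*δ*(1 - r)) with hP2
  have e1 : b1 - a2 = P1 / d1 := by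
    rw [hb1, ha2, hP1]; field_simp; ring
  have e2 : b2 - a1 = P2 / d2 := by
    rw [hb2, ha1, hP2]; field_simp; ring
  have hA : a1 < b1 := by rw [ha1, hb1]; nlinarith
  have hB : a2 < b2 := by
    have e3 : b2 - a2 = r * (2*(1-ν)*(1-2*δ)*βn*βp) / (d1 * d2) := by
      rw [hb2, ha2]; field_simp; ring
    have h2δ : 0 < 1 - 2*δ := by linarith
    have hν' : 0 < 1 - ν := by linarith
    have hnum : 0 < r * (2*(1-ν)*(1-2*δ)*βn*βp) :=
      mul_pos hr (mul_pos (mul_pos (mul_pos (mul_pos two_pos hν') h2δ) hβn0) hβp0)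
    have : 0 < b2 - a2 := by rw [e3]; exact div_pos hnum (mul_pos hd1 hd2)
    linarith
  have iff1 : a2 < b1 ↔ 0 < P1 := by
    rw [← sub_pos, e1]
    exact div_pos_iff_of_pos_right hd1
  have iff2 : a1 < b2 ↔ 0 < P2 := by
    rw [← sub_pos, e2]
    exact div_pos_iff_of_pos_right hd2
  constructor
  · rintro ⟨lam, ⟨h11, h12⟩, h21, h22⟩
    exact ⟨iff1.mp (h21.trans h12), iff2.mp (h11.trans h22)⟩
  · rintro ⟨hp1, hp2⟩
    have h1 : a2 < b1 := iff1.mpr hp1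
    have h2 : a1 < b2 := iff2.mpr hp2
    have hmax : max a1 a2 < min b1 b2 := max_lt (lt_min hA h2) (lt_min h1 hB)
    refine ⟨(max a1 a2 + min b1 b2) / 2, ⟨?_, ?_⟩, ?_, ?_⟩
    · have := le_max_left a1 a2; linarith
    · have := min_le_left b1 b2; linarith
    · have := le_max_right a1 a2; linarith
    · have := min_le_right b1 b2; linarith
end

section
/- Let c ∈ (0,1] and ν ∈ [0,1) with all parameters equal at each step (c_i = c, ν_i = ν). Then the composed transform of the previous statement simplifies: for η ∈ [0,1] and c ≠ 1−ν, (f∘⋯∘f)(η) (t times) = η / ( ((1−c)/(1−ν−c))·(1 − (c/(1−ν))^t)·η + (c/(1−ν))^t ). -/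
/-- For equal bias parameters at each step, the `t`-fold iterate of the
Blum–Stangl transformation simplifies via a geometric series (valid when
`c ≠ 1 - ν`). -/
theorem iterated_bias_uniform (t : ℕ) (c ν η : ℝ)
    (hc : c ∈ Set.Ioc (0:ℝ) 1) (hν : ν ∈ Set.Ico (0:ℝ) 1)
    (hcν : c ≠ 1 - ν) (hη : η ∈ Set.Icc (0:ℝ) 1)
    (f : ℝ → ℝ)
    (hf : ∀ u, f u = u / (((1 - c) / (1 - ν)) * u + c / (1 - ν))) :
    f^[t] η =
      η / (((1 - c) / (1 - ν - c)) * (1 - (c / (1 - ν)) ^ t) * η +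
            (c / (1 - ν)) ^ t) := by
  obtain ⟨hc0, hc1⟩ := hc
  obtain ⟨hν0, hν1⟩ := hν
  obtain ⟨hη0, hη1⟩ := hη
  have h1ν : (0:ℝ) < 1 - ν := by linarith
  set r : ℝ := c / (1 - ν) with hr
  have hr0 : 0 < r := div_pos hc0 h1ν
  have hDpos : ∀ n, 0 < (1 - c) / (1 - ν) * (∑ i ∈ Finset.range n, r ^ i) * η + r ^ n := by
    intro n
    have hS : 0 ≤ ∑ i ∈ Finset.range n, r ^ i :=
      Finset.sum_nonneg fun i _ => pow_nonneg hr0.le i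
    have h1 : 0 ≤ (1 - c) / (1 - ν) * (∑ i ∈ Finset.range n, r ^ i) * η :=
      mul_nonneg (mul_nonneg (div_nonneg (by linarith) h1ν.le) hS) hη0
    have h2 : 0 < r ^ n := pow_pos hr0 n
    linarith
  have key : ∀ n, f^[n] η =
      η / ((1 - c) / (1 - ν) * (∑ i ∈ Finset.range n, r ^ i) * η + r ^ n) := by
    intro n
    induction n with
    | zero => simp
    | succ n ih =>
      rw [Function.iterate_succ_apply', ih, hf]
      set S := ∑ i ∈ Finset.range n, r ^ i with hSdef
      set D := (1 - c) / (1 - ν) * S * η + r ^ n with hD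
      have hDne : D ≠ 0 := (hDpos n).ne'
      have hD'ne : (1 - c) / (1 - ν) * (∑ i ∈ Finset.range (n+1), r ^ i) * η + r ^ (n+1) ≠ 0 :=
        (hDpos (n+1)).ne'
      rw [geom_sum_succ] at hD'ne ⊢
      have hnum : (1 - c) / (1 - ν) * η + r * D =
          (1 - c) / (1 - ν) * (r * S + 1) * η + r ^ (n + 1) := by
        rw [hD]; ring
      have hX : (1 - c) / (1 - ν) * (η / D) + r =
          ((1 - c) / (1 - ν) * (r * S + 1) * η + r ^ (n + 1)) / D := by
        rw [← hnum, add_div, ← mul_div_assoc, mul_div_cancel_right₀ _ hDne]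
      rw [hX, div_div_div_cancel_right₀ hDne]
  rw [key t]
  have hrne : (1:ℝ) - r ≠ 0 := by
    rw [hr]
    intro h
    apply hcν
    field_simp at h
    linarith
  have hsum : ∑ i ∈ Finset.range t, r ^ i = (1 - r ^ t) / (1 - r) := by
    rw [geom_sum_eq]
    · rw [div_eq_div_iff (fun h => hrne (by linarith)) hrne]; ring
    · intro h; apply hrne; rw [h]; ring
  rw [hsum]
  congr 2
  have hνc : (1:ℝ) - ν - c ≠ 0 := fun h => hcν (by linarith)
  have h1r : (1:ℝ) - r = (1 - ν - c) / (1 - ν) := by rw [hr]; field_simp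
  rw [h1r]
  field_simp
end
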